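/- Let A be a (2×2)-type generic partitioned matrix and I a matching of A with the combinatorial structure of Theorem (chara) (conditions (Deg),(Path),(Cycle),(VL)). Then for every non-isolated (rank-1) connected component C of I, rank A_C = |C|, the number of edges of C. -/

import Mathlib

open Matrix

/-- The `(2 × 2)`-type generic partitioned matrix with blocks `A_{αβ} x_{αβ}`,
restricted to blocks in `J`, over the rational function field `F(x)`. -/
noncomputable def genPartMat {F : Type*} [Field F] {μ ν : ℕ}
    (A : Fin μ → Fin ν → Matrix (Fin 2) (Fin 2) F) (J : Finset (Fin μ × Fin ν)) :
    Matrix (Fin μ × Fin 2) (Fin ν × Fin 2)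
      (FractionRing (MvPolynomial (Fin μ × Fin ν) F)) :=
  Matrix.of fun p q =>
    if (p.1, q.1) ∈ J then
      algebraMap (MvPolynomial (Fin μ × Fin ν) F) _
        (MvPolynomial.C (A p.1 q.1 p.2 q.2) * MvPolynomial.X (p.1, q.1))
    else 0

/-- Two edges are adjacent if they share a row-block or column-block index. -/
def edgeAdj {μ ν : ℕ} (e f : Fin μ × Fin ν) : Prop := e.1 = f.1 ∨ e.2 = f.2

section RankAux

set_option linter.unusedSectionVars false

variable {K : Type*} [Field K] {m n : Type*} [Fintype m] [Fintype n] [DecidableEq m] [DecidableEq n]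

/-- block-diagonal rank additivity -/
lemma rank_add_of_disjoint_support (M N : Matrix m n K) (p : m → Prop) (q : n → Prop)
    [DecidablePred p] [DecidablePred q]
    (hM : ∀ i j, M i j ≠ 0 → p i ∧ q j) (hN : ∀ i j, N i j ≠ 0 → ¬ p i ∧ ¬ q j) :
    (M + N).rank = M.rank + N.rank := by
  have hMv : ∀ v : n → K, M.mulVec (fun j => if q j then v j else 0) = M.mulVec v := by
    intro v; funext i; unfold mulVec dotProduct
    refine Finset.sum_congr rfl fun j _ => ?_
    by_cases hq : q j
    · simp [hq]
    · rcases eq_or_ne (M i j) 0 with h | h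
      · simp [h]
      · exact absurd (hM i j h).2 hq
  have hNv : ∀ v : n → K, N.mulVec (fun j => if q j then v j else 0) = 0 := by
    intro v; funext i; unfold mulVec dotProduct
    refine Finset.sum_eq_zero fun j _ => ?_
    by_cases hq : q j
    · rcases eq_or_ne (N i j) 0 with h | h
      · simp [h]
      · exact absurd hq (hN i j h).2
    · simp [hq]
  have hNv' : ∀ v : n → K, N.mulVec (fun j => if q j then 0 else v j) = N.mulVec v := by
    intro v; funext i; unfold mulVec dotProduct
    refine Finset.sum_congr rfl fun j _ => ?_
    by_cases hq : q j
    · rcases eq_or_ne (N i j) 0 with h | h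
      · simp [h]
      · exact absurd hq (hN i j h).2
    · simp [hq]
  have hMv' : ∀ v : n → K, M.mulVec (fun j => if q j then 0 else v j) = 0 := by
    intro v; funext i; unfold mulVec dotProduct
    refine Finset.sum_eq_zero fun j _ => ?_
    by_cases hq : q j
    · simp [hq]
    · rcases eq_or_ne (M i j) 0 with h | h
      · simp [h]
      · exact absurd (hM i j h).2 hq
  have hrange : LinearMap.range (M + N).mulVecLin
      = LinearMap.range M.mulVecLin ⊔ LinearMap.range N.mulVecLin := by
    apply le_antisymm
    · rintro w ⟨v, rfl⟩
      have h' : (M + N).mulVecLin v = M.mulVecLin v + N.mulVecLin v := by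
        rw [mulVecLin_add]; rfl
      rw [h']
      exact Submodule.add_mem_sup (LinearMap.mem_range.mpr ⟨v, rfl⟩)
        (LinearMap.mem_range.mpr ⟨v, rfl⟩)
    · refine sup_le ?_ ?_
      · rintro w ⟨v, rfl⟩
        refine ⟨fun j => if q j then v j else 0, ?_⟩
        simp only [mulVecLin_apply, add_mulVec, hMv, hNv, add_zero]
      · rintro w ⟨v, rfl⟩
        refine ⟨fun j => if q j then 0 else v j, ?_⟩
        simp only [mulVecLin_apply, add_mulVec, hNv', hMv', zero_add]
  have hdisj : LinearMap.range M.mulVecLin ⊓ LinearMap.range N.mulVecLin = ⊥ := by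
    rw [Submodule.eq_bot_iff]
    rintro w ⟨⟨v, hv⟩, ⟨u, hu⟩⟩
    funext i
    by_cases hp : p i
    · rw [← hu]
      simp only [mulVecLin_apply, mulVec, dotProduct]
      refine Finset.sum_eq_zero fun j _ => ?_
      rcases eq_or_ne (N i j) 0 with h | h
      · simp [h]
      · exact absurd hp (hN i j h).1
    · rw [← hv]
      simp only [mulVecLin_apply, mulVec, dotProduct]
      refine Finset.sum_eq_zero fun j _ => ?_
      rcases eq_or_ne (M i j) 0 with h | h
      · simp [h]
      · exact absurd (hM i j h).1 hp
  have hfin := Submodule.finrank_sup_add_finrank_inf_eq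
    (LinearMap.range M.mulVecLin) (LinearMap.range N.mulVecLin)
  rw [hdisj, finrank_bot, add_zero] at hfin
  rw [Matrix.rank, Matrix.rank, Matrix.rank, hrange, hfin]

/-- A nonsingular s×s submatrix gives a rank lower bound. -/
lemma le_rank_of_submatrix_det_ne_zero (M : Matrix m n K) {s : ℕ}
    (f : Fin s → m) (g : Fin s → n) (h : (M.submatrix f g).det ≠ 0) :
    s ≤ M.rank := by
  classical
  have hsub : M.submatrix f g =
      (Matrix.of fun i k => if f i = k then (1 : K) else 0) * M *
      (Matrix.of fun k j => if g j = k then (1 : K) else 0) := by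
    funext i j
    simp only [Matrix.mul_apply, submatrix_apply, Matrix.of_apply]
    simp [Finset.sum_ite_eq, Finset.sum_mul, ite_mul, Finset.sum_ite_eq']
  have hunit : IsUnit (M.submatrix f g) := by
    rw [Matrix.isUnit_iff_isUnit_det]
    exact isUnit_iff_ne_zero.mpr h
  have h1 : (M.submatrix f g).rank = s := by
    rw [Matrix.rank_of_isUnit _ hunit, Fintype.card_fin]
  calc s = (M.submatrix f g).rank := h1.symm
    _ ≤ _ := by
      rw [hsub]
      exact le_trans (Matrix.rank_mul_le_left _ _)
        (Matrix.rank_mul_le_right _ _)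

/-- pick independent columns realizing the rank -/
lemma exists_cols (M : Matrix m n K) :
    ∃ g : Fin M.rank → n, Function.Injective g ∧
      LinearIndependent K (fun i => Mᵀ (g i)) := by
  classical
  obtain ⟨b, hbsub, hbspan, hbind⟩ := exists_linearIndependent K (Set.range Mᵀ)
  have hbfin : b.Finite := (Set.finite_range Mᵀ).subset hbsub
  haveI : Fintype b := hbfin.fintype
  have hfr : M.rank = Fintype.card b := by
    rw [Matrix.rank_eq_finrank_span_cols]
    change Module.finrank K (Submodule.span K (Set.range Mᵀ)) = _
    rw [← hbspan, finrank_span_set_eq_card hbind,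
      Set.toFinset_card]
  have hchoice : ∀ v : b, ∃ j : n, Mᵀ j = (v : m → K) := fun v => hbsub v.2
  choose jdx hjdx using hchoice
  let eb : Fin M.rank ≃ b := (Fintype.equivFinOfCardEq hfr.symm).symm
  refine ⟨fun i => jdx (eb i), ?_, ?_⟩
  · intro i i' hii
    have h2 : Mᵀ (jdx (eb i)) = Mᵀ (jdx (eb i')) := congrArg Mᵀ hii
    rw [hjdx, hjdx] at h2
    exact eb.injective (Subtype.ext h2)
  · have heq : (fun i => Mᵀ (jdx (eb i))) = (fun v : b => (v : m → K)) ∘ eb := by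
      funext i
      simp only [Function.comp_apply, hjdx]
    rw [heq]
    exact hbind.comp eb eb.injective

/-- existence of a nonsingular minor of size rank -/
lemma exists_submatrix_det_ne_zero (M : Matrix m n K) :
    ∃ f : Fin M.rank → m, ∃ g : Fin M.rank → n, Function.Injective f ∧ Function.Injective g ∧
      (M.submatrix f g).det ≠ 0 := by
  classical
  obtain ⟨g, hginj, hgind⟩ := exists_cols M
  set N : Matrix m (Fin M.rank) K := M.submatrix id g with hN
  have hNrank : N.rank = M.rank := by
    have h1 : Nᵀ.rank = M.rank := by
      have h2 : LinearIndependent K (fun i => Nᵀ i) := hgind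
      exact h2.rank_matrix.trans (Fintype.card_fin _)
    rw [← Matrix.rank_transpose, h1]
  obtain ⟨f', hfinj', hfind'⟩ := exists_cols Nᵀ
  have hcard : Nᵀ.rank = M.rank := by rw [Matrix.rank_transpose, hNrank]
  refine ⟨fun i => f' (Fin.cast hcard.symm i), g, ?_, hginj, ?_⟩
  · intro a b hab
    exact Fin.cast_injective _ (hfinj' hab)
  · have hind : LinearIndependent K
        (fun i => (M.submatrix (fun i => f' (Fin.cast hcard.symm i)) g) i) := by
      have heq : (fun i => (M.submatrix (fun i => f' (Fin.cast hcard.symm i)) g) i)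
          = (fun i => Nᵀᵀ (f' i)) ∘ (Fin.cast hcard.symm) := rfl
      rw [heq]
      exact hfind'.comp _ (Fin.cast_injective _)
    have hu : IsUnit (M.submatrix (fun i => f' (Fin.cast hcard.symm i)) g) :=
      linearIndependent_rows_iff_isUnit.mp hind
    have hdet : IsUnit (M.submatrix (fun i => f' (Fin.cast hcard.symm i)) g).det :=
      (Matrix.isUnit_iff_isUnit_det _).mp hu
    exact hdet.ne_zero

end RankAux

section PolyAux

open MvPolynomial

variable {σ : Type*} {R : Type*} [CommRing R] [DecidableEq σ]

/-- support of a product decomposes as a sum of supports -/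
lemma support_prod_decomp {ι : Type*} [DecidableEq ι] (s : Finset ι) (p : ι → MvPolynomial σ R)
    (d : σ →₀ ℕ) (hd : d ∈ (∏ i ∈ s, p i).support) :
    ∃ df : ι → (σ →₀ ℕ), (∀ i ∈ s, df i ∈ (p i).support) ∧ d = ∑ i ∈ s, df i := by
  classical
  induction s using Finset.induction_on generalizing d with
  | empty =>
    refine ⟨fun _ => 0, by simp, ?_⟩
    simp only [Finset.sum_empty]
    rw [MvPolynomial.mem_support_iff, Finset.prod_empty] at hd
    by_contra hne
    rw [MvPolynomial.coeff_one, if_neg (fun h => hne h.symm)] at hd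
    exact hd rfl
  | insert a t hnotmem ih =>
    rw [Finset.prod_insert hnotmem] at hd
    have hmem := MvPolynomial.support_mul _ _ hd
    rw [Finset.mem_add] at hmem
    obtain ⟨da, hda, dt, hdt, hsum⟩ := hmem
    obtain ⟨df, hdf, hdsum⟩ := ih dt hdt
    refine ⟨fun i => if i = a then da else df i, ?_, ?_⟩
    · intro i hi
      rcases Finset.mem_insert.mp hi with rfl | hi'
      · simpa using hda
      · have : i ≠ a := fun h => hnotmem (h ▸ hi')
        simpa [this] using hdf i hi'
    · rw [Finset.sum_insert hnotmem]
      simp only [if_pos rfl]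
      rw [← hsum]
      congr 1
      rw [hdsum]
      exact Finset.sum_congr rfl fun i hi => by
        have : i ≠ a := fun h => hnotmem (h ▸ hi)
        simp [this]

/-- monomials of a determinant -/
lemma det_support_decomp {r : ℕ} (M : Matrix (Fin r) (Fin r) (MvPolynomial σ R))
    (d : σ →₀ ℕ) (hd : d ∈ M.det.support) :
    ∃ τ : Equiv.Perm (Fin r), ∃ df : Fin r → (σ →₀ ℕ),
      (∀ i, df i ∈ (M (τ i) i).support) ∧ d = ∑ i, df i := by
  classical
  rw [MvPolynomial.mem_support_iff, Matrix.det_apply] at hd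
  rw [MvPolynomial.coeff_sum] at hd
  obtain ⟨τ, -, hτ⟩ := Finset.exists_ne_zero_of_sum_ne_zero hd
  have hτ2 : MvPolynomial.coeff d (∏ i, M (τ i) i) ≠ 0 := by
    intro h0
    rw [MvPolynomial.coeff_smul, h0, smul_zero] at hτ
    exact hτ rfl
  obtain ⟨df, hdf, hsum⟩ := support_prod_decomp Finset.univ (fun i => M (τ i) i) d
    (MvPolynomial.mem_support_iff.mpr hτ2)
  exact ⟨τ, df, fun i => hdf i (Finset.mem_univ i), hsum⟩

/-- substitute 0 for the variable `e` -/
noncomputable def killVar (e : σ) : MvPolynomial σ R →ₐ[R] MvPolynomial σ R :=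
  MvPolynomial.aeval (fun v => if v = e then 0 else MvPolynomial.X v)

lemma killVar_monomial (e : σ) (m : σ →₀ ℕ) (a : R) :
    killVar e (monomial m a) = if m e = 0 then monomial m a else 0 := by
  rw [killVar, MvPolynomial.aeval_monomial]
  by_cases hme : m e = 0
  · rw [if_pos hme]
    have hprod : (m.prod fun v k => (if v = e then (0 : MvPolynomial σ R) else X v) ^ k)
        = m.prod fun v k => (X v) ^ k := by
      apply Finsupp.prod_congr
      intro v hv
      have hvne : v ≠ e := by
        intro h
        rw [h] at hv
        exact (Finsupp.mem_support_iff.mp hv) hme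
      rw [if_neg hvne]
    rw [hprod, MvPolynomial.algebraMap_eq, ← MvPolynomial.monomial_eq]
  · rw [if_neg hme]
    have he : e ∈ m.support := Finsupp.mem_support_iff.mpr hme
    have hzero : (m.prod fun v k => (if v = e then (0 : MvPolynomial σ R) else X v) ^ k) = 0 := by
      rw [Finsupp.prod]
      apply Finset.prod_eq_zero he
      rw [if_pos rfl]
      exact zero_pow hme
    rw [hzero, mul_zero]

lemma killVar_C (e : σ) (a : R) : killVar e (MvPolynomial.C a) = MvPolynomial.C a := by
  rw [killVar, MvPolynomial.aeval_C, MvPolynomial.algebraMap_eq]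

lemma killVar_X (e w : σ) :
    killVar (R := R) e (MvPolynomial.X w) = if w = e then 0 else MvPolynomial.X w := by
  rw [killVar, MvPolynomial.aeval_X]

lemma coeff_killVar (e : σ) (p : MvPolynomial σ R) (d : σ →₀ ℕ) (hd : d e = 0) :
    coeff d (killVar e p) = coeff d p := by
  conv_lhs => rw [p.as_sum]
  rw [map_sum, MvPolynomial.coeff_sum]
  have hterm : ∀ m ∈ p.support,
      coeff d (killVar e (monomial m (coeff m p))) = if m = d then coeff m p else 0 := by
    intro m _
    rw [killVar_monomial]
    by_cases hme : m e = 0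
    · rw [if_pos hme, MvPolynomial.coeff_monomial]
    · rw [if_neg hme]
      have hmd : m ≠ d := fun h => hme (h ▸ hd)
      rw [if_neg hmd, MvPolynomial.coeff_zero]
  rw [Finset.sum_congr rfl hterm, Finset.sum_ite_eq' p.support d (fun m => coeff m p)]
  by_cases hdp : d ∈ p.support
  · rw [if_pos hdp]
  · rw [if_neg hdp, eq_comm]
    exact MvPolynomial.notMem_support_iff.mp hdp

end PolyAux

section Main

open MvPolynomial

variable {F : Type*} [Field F] {μ ν : ℕ}

/-- the polynomial version of `genPartMat` -/
noncomputable def genPartMatPoly (A : Fin μ → Fin ν → Matrix (Fin 2) (Fin 2) F)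
    (J : Finset (Fin μ × Fin ν)) :
    Matrix (Fin μ × Fin 2) (Fin ν × Fin 2) (MvPolynomial (Fin μ × Fin ν) F) :=
  Matrix.of fun p q =>
    if (p.1, q.1) ∈ J then
      MvPolynomial.C (A p.1 q.1 p.2 q.2) * MvPolynomial.X (p.1, q.1)
    else 0

lemma genPartMat_eq_map (A : Fin μ → Fin ν → Matrix (Fin 2) (Fin 2) F)
    (J : Finset (Fin μ × Fin ν)) :
    genPartMat A J = (genPartMatPoly A J).map
      (algebraMap (MvPolynomial (Fin μ × Fin ν) F) (FractionRing (MvPolynomial (Fin μ × Fin ν) F))) := by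
  funext p q
  simp only [genPartMat, genPartMatPoly, Matrix.map_apply, Matrix.of_apply]
  by_cases h : (p.1, q.1) ∈ J
  · rw [if_pos h, if_pos h]
  · rw [if_neg h, if_neg h, map_zero]

end Main

/-- Let `I` be a matching of a `(2×2)`-type generic partitioned matrix `A` (removing any
edge of `I` strictly decreases the rank of `A_I`), and let `C` be a non-isolated connected
component of `I`: `C ⊆ I` has at least two edges, is closed under adjacency within `I`,
and is connected under edge-adjacency. Then `rank A_C = |C|`. -/
theorem genPartMat_component_rank_eq_card {F : Type*} [Field F] {μ ν : ℕ}
    (A : Fin μ → Fin ν → Matrix (Fin 2) (Fin 2) F) (I : Finset (Fin μ × Fin ν))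
    (hIE : ∀ e ∈ I, A e.1 e.2 ≠ 0)
    (hmatch : ∀ e ∈ I, (genPartMat A (I.erase e)).rank < (genPartMat A I).rank)
    (C : Finset (Fin μ × Fin ν)) (hCI : C ⊆ I)
    (hcard : 1 < C.card)
    (hclosed : ∀ e ∈ C, ∀ f ∈ I, edgeAdj e f → f ∈ C)
    (hconn : ∀ e ∈ C, ∀ f ∈ C,
      Relation.ReflTransGen (fun e' f' => e' ∈ C ∧ f' ∈ C ∧ edgeAdj e' f') e f) :
    (genPartMat A C).rank = C.card := by
  classical
  set R := MvPolynomial (Fin μ × Fin ν) F with hR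
  set K := FractionRing R with hK
  set φ : R →+* K := algebraMap R K with hφ
  have hφinj : Function.Injective φ := IsFractionRing.injective R K
  -- splitting lemma
  have hsplit : ∀ J ⊆ I, (genPartMat A J).rank
      = (genPartMat A (J ∩ C)).rank + (genPartMat A (J \ C)).rank := by
    intro J hJ
    have hadd : genPartMat A J = genPartMat A (J ∩ C) + genPartMat A (J \ C) := by
      funext p q
      simp only [genPartMat, Matrix.of_apply, Matrix.add_apply]
      by_cases h1 : (p.1, q.1) ∈ J
      · by_cases h2 : (p.1, q.1) ∈ C
        · rw [if_pos h1, if_pos (Finset.mem_inter.mpr ⟨h1, h2⟩),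
            if_neg (fun h => (Finset.mem_sdiff.mp h).2 h2), add_zero]
        · rw [if_pos h1, if_neg (fun h => h2 (Finset.mem_inter.mp h).2),
            if_pos (Finset.mem_sdiff.mpr ⟨h1, h2⟩), zero_add]
      · rw [if_neg h1, if_neg (fun h => h1 (Finset.mem_inter.mp h).1),
          if_neg (fun h => h1 (Finset.mem_sdiff.mp h).1), add_zero]
    rw [hadd]
    apply rank_add_of_disjoint_support _ _
      (fun p => p.1 ∈ C.image Prod.fst) (fun q => q.1 ∈ C.image Prod.snd)
    · intro p q hne
      by_cases hmem : (p.1, q.1) ∈ J ∩ C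
      · have h2 := (Finset.mem_inter.mp hmem).2
        exact ⟨Finset.mem_image.mpr ⟨(p.1, q.1), h2, rfl⟩,
          Finset.mem_image.mpr ⟨(p.1, q.1), h2, rfl⟩⟩
      · refine absurd ?_ hne
        show (if (p.1, q.1) ∈ J ∩ C then _ else 0) = 0
        rw [if_neg hmem]
    · intro p q hne
      by_cases hmem : (p.1, q.1) ∈ J \ C
      · obtain ⟨hmJ, hmC⟩ := Finset.mem_sdiff.mp hmem
        constructor
        · intro hp
          obtain ⟨x, hxC, hx1⟩ := Finset.mem_image.mp hp
          exact hmC (hclosed x hxC (p.1, q.1) (hJ hmJ) (Or.inl hx1))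
        · intro hq
          obtain ⟨x, hxC, hx2⟩ := Finset.mem_image.mp hq
          exact hmC (hclosed x hxC (p.1, q.1) (hJ hmJ) (Or.inr hx2))
      · refine absurd ?_ hne
        show (if (p.1, q.1) ∈ J \ C then _ else 0) = 0
        rw [if_neg hmem]
  -- neighbor existence
  have hnbr : ∀ e ∈ C, ∃ e', e' ∈ C ∧ e' ≠ e ∧ edgeAdj e e' := by
    intro e he
    by_contra hcon
    push_neg at hcon
    obtain ⟨a, haC, b, hbC, hab⟩ := Finset.one_lt_card.mp hcard
    have hkey : ∀ y, Relation.ReflTransGen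
        (fun e' f' => e' ∈ C ∧ f' ∈ C ∧ edgeAdj e' f') e y → y = e := by
      intro y hy
      induction hy with
      | refl => rfl
      | tail _ hstep ih =>
        rename_i b' c' _
        subst ih
        by_contra hc
        exact hcon c' hstep.2.1 hc hstep.2.2
    rcases eq_or_ne a e with rfl | hae
    · exact hab (hkey b (hconn a haC b hbC)).symm
    · exact hae (hkey a (hconn e he a haC))
  -- the nonsingular minor
  set r := (genPartMat A C).rank with hr
  obtain ⟨f, g, hfinj, hginj, hdet⟩ := exists_submatrix_det_ne_zero (genPartMat A C)
  have hsubmap : ∀ J, (genPartMat A J).submatrix f g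
      = ((genPartMatPoly A J).submatrix f g).map φ := by
    intro J
    have h := genPartMat_eq_map A J
    exact congrArg (fun M => M.submatrix f g) h
  set P : MvPolynomial (Fin μ × Fin ν) F := ((genPartMatPoly A C).submatrix f g).det with hP
  have hPmap : φ P = ((genPartMat A C).submatrix f g).det := by
    rw [hsubmap]
    exact RingHom.map_det φ _
  have hPne : P ≠ 0 := by
    intro h0
    rw [← hPmap, h0, map_zero] at hdet
    exact hdet rfl
  obtain ⟨d, hdsupp⟩ := Finset.nonempty_iff_ne_empty.mpr
    (fun h => hPne (MvPolynomial.support_eq_empty.mp h))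
  obtain ⟨τ, df, hdf, hdsum⟩ := det_support_decomp _ d hdsupp
  -- identify supports of the entries
  set v : Fin r → Fin μ × Fin ν := fun i => ((f (τ i)).1, (g i).1) with hv
  have hvC : ∀ i, v i ∈ C ∧ df i = Finsupp.single (v i) 1 := by
    intro i
    have h := hdf i
    simp only [Matrix.submatrix_apply] at h
    by_cases hm : v i ∈ C
    · refine ⟨hm, ?_⟩
      have hentry : genPartMatPoly A C (f (τ i)) (g i)
          = MvPolynomial.monomial (Finsupp.single (v i) 1)
              (A (f (τ i)).1 (g i).1 (f (τ i)).2 (g i).2) := by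
        simp only [genPartMatPoly, Matrix.of_apply]
        rw [if_pos hm, MvPolynomial.C_mul_X_eq_monomial]
      rw [hentry] at h
      rw [MvPolynomial.support_monomial] at h
      by_cases ha : A (f (τ i)).1 (g i).1 (f (τ i)).2 (g i).2 = 0
      · rw [if_pos ha] at h
        exact absurd h (Finset.notMem_empty _)
      · rw [if_neg ha] at h
        exact Finset.mem_singleton.mp h
    · exfalso
      have hentry : genPartMatPoly A C (f (τ i)) (g i) = 0 := by
        simp only [genPartMatPoly, Matrix.of_apply]
        rw [if_neg hm]
      rw [hentry] at h
      simp at h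
  -- the coefficient count
  have hdval : ∀ e, d e = (Finset.univ.filter (fun i => v i = e)).card := by
    intro e
    rw [hdsum, Finsupp.finset_sum_apply, Finset.card_filter]
    refine Finset.sum_congr rfl fun i _ => ?_
    rw [(hvC i).2, Finsupp.single_apply]
  -- surjectivity onto C via the matching property
  have hsurj : ∀ e ∈ C, d e ≠ 0 := by
    intro e he hde0
    set ψ : MvPolynomial (Fin μ × Fin ν) F →+* MvPolynomial (Fin μ × Fin ν) F :=
      (killVar e : MvPolynomial (Fin μ × Fin ν) F →ₐ[F] _).toRingHom with hψ
    have hψentry : ∀ p q, ψ (genPartMatPoly A C p q) = genPartMatPoly A (C.erase e) p q := by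
      intro p q
      simp only [genPartMatPoly, Matrix.of_apply]
      by_cases h1 : (p.1, q.1) ∈ C
      · rw [if_pos h1]
        have hstep : ψ (MvPolynomial.C (A p.1 q.1 p.2 q.2) * MvPolynomial.X (p.1, q.1))
            = MvPolynomial.C (A p.1 q.1 p.2 q.2)
              * (if (p.1, q.1) = e then 0 else MvPolynomial.X (p.1, q.1)) := by
          show (killVar e : MvPolynomial (Fin μ × Fin ν) F →ₐ[F] _)
              (MvPolynomial.C (A p.1 q.1 p.2 q.2) * MvPolynomial.X (p.1, q.1)) = _
          rw [_root_.map_mul, killVar_C, killVar_X]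
        rw [hstep]
        by_cases h2 : (p.1, q.1) = e
        · rw [if_pos h2, if_neg (fun h => (Finset.mem_erase.mp h).1 h2), mul_zero]
        · rw [if_neg h2, if_pos (Finset.mem_erase.mpr ⟨h2, h1⟩)]
      · rw [if_neg h1, if_neg (fun h => h1 (Finset.mem_of_mem_erase h)), map_zero]
    have hψP : ψ P = ((genPartMatPoly A (C.erase e)).submatrix f g).det := by
      rw [hP, RingHom.map_det]
      congr 1
      funext i j
      exact hψentry _ _
    have hψPne : ψ P ≠ 0 := by
      intro h0
      have hc := coeff_killVar e P d hde0
      rw [show (killVar e) P = ψ P from rfl, h0, MvPolynomial.coeff_zero] at hc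
      exact MvPolynomial.mem_support_iff.mp hdsupp hc.symm
    have hrle : r ≤ (genPartMat A (C.erase e)).rank := by
      apply le_rank_of_submatrix_det_ne_zero _ f g
      rw [hsubmap]
      have hdet2 : (((genPartMatPoly A (C.erase e)).submatrix f g).map φ).det = φ (ψ P) := by
        rw [hψP]
        exact (RingHom.map_det φ _).symm
      rw [hdet2]
      intro h0
      exact hψPne (hφinj (by rw [h0, map_zero]))
    have heI : e ∈ I := hCI he
    have h1 := hsplit I (Finset.Subset.refl I)
    have h2 := hsplit (I.erase e) (Finset.erase_subset e I)
    have hIC : I ∩ C = C := Finset.inter_eq_right.mpr hCI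
    have hIeC : (I.erase e) ∩ C = C.erase e := by
      ext x
      simp only [Finset.mem_inter, Finset.mem_erase]
      constructor
      · rintro ⟨⟨hx1, _⟩, hx3⟩
        exact ⟨hx1, hx3⟩
      · rintro ⟨hx1, hx2⟩
        exact ⟨⟨hx1, hCI hx2⟩, hx2⟩
    have hIeD : (I.erase e) \ C = I \ C := by
      ext x
      simp only [Finset.mem_sdiff, Finset.mem_erase]
      constructor
      · rintro ⟨⟨_, hx2⟩, hx3⟩
        exact ⟨hx2, hx3⟩
      · rintro ⟨hx1, hx2⟩
        exact ⟨⟨fun h => hx2 (h ▸ he), hx1⟩, hx2⟩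
    have h3 := hmatch e heI
    rw [h1, h2, hIC, hIeC, hIeD] at h3
    omega
  -- injectivity via adjacency
  have hfin2 : ∀ x y z : Fin 2, x ≠ y → z = x ∨ z = y := by decide
  have hinj : Function.Injective v := by
    intro i i' hii
    by_contra hne
    have hfne : f (τ i) ≠ f (τ i') := fun h => hne (τ.injective (hfinj h))
    have hgne : g i ≠ g i' := fun h => hne (hginj h)
    have hrow1 : (f (τ i)).1 = (f (τ i')).1 := by
      have h := congrArg Prod.fst hii
      exact h
    have hcol1 : (g i).1 = (g i').1 := by
      have h := congrArg Prod.snd hii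
      exact h
    have hrow2 : (f (τ i)).2 ≠ (f (τ i')).2 := fun h2 => hfne (Prod.ext hrow1 h2)
    have hcol2 : (g i).2 ≠ (g i').2 := fun h2 => hgne (Prod.ext hcol1 h2)
    have hrow : ∀ i'' : Fin r, (f (τ i'')).1 = (v i).1 → i'' = i ∨ i'' = i' := by
      intro i'' h''
      rcases hfin2 ((f (τ i)).2) ((f (τ i')).2) ((f (τ i'')).2) hrow2 with h | h
      · exact Or.inl (τ.injective (hfinj (Prod.ext h'' h)))
      · exact Or.inr (τ.injective (hfinj (Prod.ext (h''.trans hrow1) h)))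
    have hcol : ∀ i'' : Fin r, (g i'').1 = (v i).2 → i'' = i ∨ i'' = i' := by
      intro i'' h''
      rcases hfin2 ((g i).2) ((g i').2) ((g i'').2) hcol2 with h | h
      · exact Or.inl (hginj (Prod.ext h'' h))
      · exact Or.inr (hginj (Prod.ext (h''.trans hcol1) h))
    obtain ⟨e', he'C, he'ne, he'adj⟩ := hnbr (v i) (hvC i).1
    have hde' := hsurj e' he'C
    rw [hdval e'] at hde'
    obtain ⟨i'', hi''⟩ := Finset.card_pos.mp (Nat.pos_of_ne_zero hde')
    have hvi'' : v i'' = e' := (Finset.mem_filter.mp hi'').2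
    rcases he'adj with hadj | hadj
    · have hf'' : (f (τ i'')).1 = (v i).1 := by
        have : (f (τ i'')).1 = (v i'').1 := rfl
        rw [this, hvi'', ← hadj]
      rcases hrow i'' hf'' with rfl | rfl
      · exact he'ne (hvi''.symm.trans rfl)
      · exact he'ne (hvi''.symm.trans hii.symm)
    · have hg'' : (g i'').1 = (v i).2 := by
        have : (g i'').1 = (v i'').2 := rfl
        rw [this, hvi'', ← hadj]
      rcases hcol i'' hg'' with rfl | rfl
      · exact he'ne (hvi''.symm.trans rfl)
      · exact he'ne (hvi''.symm.trans hii.symm)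
  -- conclude
  have himg : Finset.univ.image v = C := by
    ext e
    simp only [Finset.mem_image, Finset.mem_univ, true_and]
    constructor
    · rintro ⟨i, rfl⟩
      exact (hvC i).1
    · intro he
      have hde := hsurj e he
      rw [hdval e] at hde
      obtain ⟨i, hi⟩ := Finset.card_pos.mp (Nat.pos_of_ne_zero hde)
      exact ⟨i, (Finset.mem_filter.mp hi).2⟩
  have hfinal : C.card = r := by
    rw [← himg, Finset.card_image_of_injective _ hinj, Finset.card_univ, Fintype.card_fin]
  exact hfinal.symm
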